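/- Suppose y^b is a minimal monomial generator of E_q^{(2)} and let D = {A ⊆ [q] : A nonempty, b_A = 0}. Then D is closed under unions; in particular, if D is nonempty it has a maximum element with respect to inclusion. -/

import Mathlib

open MvPolynomial

/-- Index type: nonempty subsets of `[q]`. -/
abbrev EIdx (q : ℕ) := {A : Finset (Fin q) // A.Nonempty}

/-- The generator `ε_i = ∏_{A ∋ i} y_A` of the extremal ideal. -/
noncomputable def extGen (k : Type*) [Field k] (q : ℕ) (i : Fin q) :
    MvPolynomial (EIdx q) k :=
  ∏ A : EIdx q, if i ∈ A.1 then X A else 1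

/-- The `q`-extremal ideal `E_q = (ε_1, …, ε_q)`. -/
noncomputable def extIdeal (k : Type*) [Field k] (q : ℕ) :
    Ideal (MvPolynomial (EIdx q) k) :=
  Ideal.span (Set.range (extGen k q))

/-- The `r`-th symbolic power of a square-free monomial ideal: the intersection
of the `r`-th powers of its minimal primes. -/
def symbPow {R : Type*} [CommRing R] (I : Ideal R) (r : ℕ) : Ideal R :=
  ⨅ P ∈ I.minimalPrimes, P ^ r

/-- The monomial `y^b = ∏_{∅ ≠ A ⊆ [q]} y_A^{b_A}`. -/
noncomputable def ymonF (k : Type*) [Field k] (q : ℕ)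
    (b : Finset (Fin q) → ℕ) : MvPolynomial (EIdx q) k :=
  ∏ A : EIdx q, X A ^ b A.1

/-- A minimal set cover of `[q]`: a collection of nonempty subsets whose union is
`[q]`, with no member contained in the union of the others. -/
def IsMinSetCover (q : ℕ) (C : Finset (Finset (Fin q))) : Prop :=
  (∀ A ∈ C, A.Nonempty) ∧ C.sup id = Finset.univ ∧
    ∀ A ∈ C, ¬ A ⊆ (C.erase A).sup id

/-!
The minimal primes of `E_q` are the ideals `(y_A : A ∈ T)` for the minimal covers `T` of `[q]`,
and a monomial lies in the `r`-th power of such an ideal iff its exponents add up to at least `r`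
over `T`. As every cover contains a minimal one, `y^b ∈ E_q^{(r)}` iff `∑_{A ∈ T} b_A ≥ r` for
every cover `T`. If `b_{A₁} = b_{A₂} = 0 < b_{A₁ ∪ A₂}`, lowering `b_{A₁ ∪ A₂}` by one preserves
this: a cover through `A₁ ∪ A₂` may trade it for `A₁` and `A₂`, which weigh nothing. This
contradicts minimality, and a finite union-closed family has a largest member.
-/

theorem SupClosed.exists_isGreatest {α : Type*} [SemilatticeSup α] {s : Set α} (hs : SupClosed s)
    (hfin : s.Finite) (hne : s.Nonempty) : ∃ m, IsGreatest s m := by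
  obtain ⟨m, hm⟩ := hfin.exists_maximal hne
  exact ⟨m, hm.prop, fun a ha => le_sup_left.trans (hm.2 (hs ha hm.prop) le_sup_right)⟩

theorem Finset.sum_add_single_one_apply {σ : Type*} {T : Finset σ} {A : σ} (hA : A ∈ T)
    (d : σ →₀ ℕ) :
    ∑ B ∈ T, (d + Finsupp.single A 1 : σ →₀ ℕ) B = ∑ B ∈ T, d B + 1 := by
  classical
  rw [Finsupp.coe_add, Pi.add_def, Finset.sum_add_distrib,
    Finset.sum_eq_single_of_mem A hA (fun B _ hB => Finsupp.single_eq_of_ne hB),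
    Finsupp.single_eq_same]

section VarIdeal

variable (R : Type*) {σ : Type*} [CommSemiring R]

noncomputable def varIdeal (T : Finset σ) : Ideal (MvPolynomial σ R) :=
  Ideal.span (X '' T)

variable {R}

theorem varIdeal_pow_eq_span_monomial (T : Finset σ) (r : ℕ) :
    varIdeal R T ^ r = Ideal.span ((monomial · 1) '' {d | r ≤ ∑ A ∈ T, d A}) := by
  induction r with
  | zero =>
    rw [pow_zero, Ideal.one_eq_top, eq_comm, Ideal.eq_top_iff_one, ← C_1, ← monomial_zero']
    exact Ideal.subset_span ⟨0, Nat.zero_le _, rfl⟩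
  | succ r ih =>
    rw [pow_succ', ih, varIdeal, Ideal.span_mul_span]
    apply le_antisymm <;> rw [Ideal.span_le]
    · rintro _ ⟨_, ⟨A, hA, rfl⟩, _, ⟨d, hd, rfl⟩, rfl⟩
      refine Ideal.subset_span ⟨d + Finsupp.single A 1, ?_, by simp [monomial_add_single, mul_comm]⟩
      rw [Set.mem_ofPred_eq, Finset.sum_add_single_one_apply hA]
      exact Nat.succ_le_succ hd
    · rintro _ ⟨d, hd, rfl⟩
      obtain ⟨A, hA, hdA⟩ : ∃ A ∈ T, d A ≠ 0 := by
        by_contra! h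
        rw [Set.mem_ofPred_eq, Finset.sum_eq_zero h] at hd
        omega
      obtain ⟨e, rfl⟩ : ∃ e, d = e + Finsupp.single A 1 :=
        ⟨d - Finsupp.single A 1, (tsub_add_cancel_of_le
          (Finsupp.single_le_iff.2 (Nat.one_le_iff_ne_zero.2 hdA))).symm⟩
      rw [Set.mem_ofPred_eq, Finset.sum_add_single_one_apply hA] at hd
      exact Ideal.subset_span ⟨X A, ⟨A, hA, rfl⟩, monomial e 1, ⟨e, Nat.le_of_succ_le_succ hd, rfl⟩,
        by simp [monomial_add_single, mul_comm]⟩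

theorem monomial_one_mem_varIdeal_pow_iff [Nontrivial R] (T : Finset σ) (r : ℕ) (d : σ →₀ ℕ) :
    monomial d (1 : R) ∈ varIdeal R T ^ r ↔ r ≤ ∑ A ∈ T, d A := by
  classical
  rw [varIdeal_pow_eq_span_monomial, mem_ideal_span_monomial_image, support_monomial,
    if_neg one_ne_zero]
  simp only [Finset.mem_singleton, forall_eq, Set.mem_ofPred_eq]
  exact ⟨fun ⟨e, he, hle⟩ => he.trans (Finset.sum_le_sum fun A _ => hle A),
    fun h => ⟨d, h, le_rfl⟩⟩

theorem X_mem_varIdeal_iff [Nontrivial R] (T : Finset σ) (A : σ) :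
    (X A : MvPolynomial σ R) ∈ varIdeal R T ↔ A ∈ T := by
  classical
  rw [X, ← pow_one (varIdeal R T), monomial_one_mem_varIdeal_pow_iff]
  simp only [Finsupp.single_apply, Finset.sum_ite_eq]
  split_ifs with h <;> simp [h]

end VarIdeal

section CommRing

variable {R σ : Type*} [CommRing R]

theorem varIdeal_eq_ker_aeval [DecidableEq σ] (T : Finset σ) :
    varIdeal R T =
      RingHom.ker (aeval fun A => if A ∈ T then 0 else X A :
        MvPolynomial σ R →ₐ[R] MvPolynomial σ R) := by
  set φ : MvPolynomial σ R →ₐ[R] MvPolynomial σ R := aeval fun A => if A ∈ T then 0 else X A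
  have hφ :
      (Ideal.Quotient.mkₐ R (varIdeal R T)).comp φ = Ideal.Quotient.mkₐ R (varIdeal R T) := by
    refine algHom_ext fun A => ?_
    by_cases hA : A ∈ T
    · rw [AlgHom.comp_apply, aeval_X, if_pos hA, map_zero, Ideal.Quotient.mkₐ_eq_mk, eq_comm,
        Ideal.Quotient.eq_zero_iff_mem]
      exact Ideal.subset_span ⟨A, hA, rfl⟩
    · simp [φ, hA]
  apply le_antisymm
  · rw [varIdeal, Ideal.span_le]
    rintro _ ⟨A, hA, rfl⟩
    simp [φ, Finset.mem_coe.1 hA]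
  · intro f hf
    have := AlgHom.congr_fun hφ f
    rw [AlgHom.comp_apply, RingHom.mem_ker.1 hf, map_zero, Ideal.Quotient.mkₐ_eq_mk, eq_comm,
      Ideal.Quotient.eq_zero_iff_mem] at this
    exact this

theorem varIdeal_isPrime [IsDomain R] (T : Finset σ) : (varIdeal R T).IsPrime := by
  classical
  rw [varIdeal_eq_ker_aeval]
  exact RingHom.ker_isPrime _

end CommRing

section ExtremalIdeal

variable {k : Type*} [Field k] {q : ℕ}

def IsCover (T : Finset (EIdx q)) : Prop :=
  ∀ i : Fin q, ∃ A ∈ T, i ∈ A.1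

theorem IsCover.insert_insert_erase {T : Finset (EIdx q)} (hT : IsCover T) {A₀ A₁ A₂ : EIdx q}
    (h₀ : A₀.1 = A₁.1 ∪ A₂.1) : IsCover (insert A₁ (insert A₂ (T.erase A₀))) := by
  intro i
  obtain ⟨A, hAT, hiA⟩ := hT i
  by_cases hA : A = A₀
  · subst hA
    rcases Finset.mem_union.1 (h₀ ▸ hiA) with hi | hi
    · exact ⟨A₁, by simp, hi⟩
    · exact ⟨A₂, by simp, hi⟩
  · exact ⟨A, by simp [hA, hAT], hiA⟩

theorem extIdeal_le_varIdeal {T : Finset (EIdx q)} (hT : IsCover T) :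
    extIdeal k q ≤ varIdeal k T := by
  rw [extIdeal, Ideal.span_le]
  rintro _ ⟨i, rfl⟩
  obtain ⟨A, hAT, hiA⟩ := hT i
  have hdvd : (X A : MvPolynomial (EIdx q) k) ∣ extGen k q i := by
    rw [extGen]
    simpa only [if_pos hiA] using Finset.dvd_prod_of_mem
      (fun B : EIdx q => if i ∈ B.1 then (X B : MvPolynomial (EIdx q) k) else 1) (Finset.mem_univ A)
  exact Ideal.mem_of_dvd _ hdvd (Ideal.subset_span ⟨A, hAT, rfl⟩)

theorem exists_X_mem_of_extIdeal_le {P : Ideal (MvPolynomial (EIdx q) k)} [hP : P.IsPrime]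
    (h : extIdeal k q ≤ P) (i : Fin q) : ∃ A : EIdx q, i ∈ A.1 ∧ X A ∈ P := by
  have hi : extGen k q i ∈ P := h (Ideal.subset_span ⟨i, rfl⟩)
  obtain ⟨A, -, hA⟩ := hP.prod_mem_iff.1 hi
  by_cases hiA : i ∈ A.1
  · rw [if_pos hiA] at hA
    exact ⟨A, hiA, hA⟩
  · rw [if_neg hiA] at hA
    exact absurd ((Ideal.eq_top_iff_one P).2 hA) hP.ne_top

theorem exists_isCover_of_mem_minimalPrimes {P : Ideal (MvPolynomial (EIdx q) k)}
    (hP : P ∈ (extIdeal k q).minimalPrimes) : ∃ T, IsCover T ∧ P = varIdeal k T := by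
  classical
  obtain ⟨⟨hprime, hle⟩, hmin⟩ := hP
  set T := Finset.univ.filter fun A => X A ∈ P
  have hT : IsCover T := fun i => by
    obtain ⟨A, hiA, hA⟩ := exists_X_mem_of_extIdeal_le hle i
    exact ⟨A, Finset.mem_filter.2 ⟨Finset.mem_univ A, hA⟩, hiA⟩
  have hTP : varIdeal k T ≤ P := by
    rw [varIdeal, Ideal.span_le]
    rintro _ ⟨A, hA, rfl⟩
    exact (Finset.mem_filter.1 hA).2
  exact ⟨T, hT, le_antisymm (hmin ⟨varIdeal_isPrime T, extIdeal_le_varIdeal hT⟩ hTP) hTP⟩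

theorem exists_subset_varIdeal_mem_minimalPrimes {T : Finset (EIdx q)} (hT : IsCover T) :
    ∃ U ⊆ T, varIdeal k U ∈ (extIdeal k q).minimalPrimes := by
  have := varIdeal_isPrime (R := k) T
  obtain ⟨Q, hQ, hQT⟩ := Ideal.exists_minimalPrimes_le (extIdeal_le_varIdeal (k := k) hT)
  obtain ⟨U, -, rfl⟩ := exists_isCover_of_mem_minimalPrimes hQ
  exact ⟨U, fun A hA => (X_mem_varIdeal_iff T A).1 (hQT ((X_mem_varIdeal_iff U A).2 hA)), hQ⟩

theorem ymonF_eq_monomial (b : Finset (Fin q) → ℕ) :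
    ymonF k q b = monomial (Finsupp.equivFunOnFinite.symm fun A : EIdx q => b A.1) 1 := by
  rw [monomial_eq, C_1, one_mul, Finsupp.prod_fintype _ _ fun _ => pow_zero _]
  rfl

theorem ymonF_mem_symbPow_iff (b : Finset (Fin q) → ℕ) (r : ℕ) :
    ymonF k q b ∈ symbPow (extIdeal k q) r ↔ ∀ T, IsCover T → r ≤ ∑ A ∈ T, b A.1 := by
  have hmem : ∀ T, ymonF k q b ∈ varIdeal k T ^ r ↔ r ≤ ∑ A ∈ T, b A.1 := fun T => by
    rw [ymonF_eq_monomial, monomial_one_mem_varIdeal_pow_iff]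
    rfl
  simp only [symbPow, Submodule.mem_iInf]
  constructor
  · intro h T hT
    obtain ⟨U, hUT, hU⟩ := exists_subset_varIdeal_mem_minimalPrimes (k := k) hT
    exact ((hmem U).1 (h _ hU)).trans (Finset.sum_le_sum_of_subset hUT)
  · intro h P hP
    obtain ⟨T, hT, rfl⟩ := exists_isCover_of_mem_minimalPrimes hP
    exact (hmem T).2 (h T hT)

theorem le_sum_decrement_union {r : ℕ} {b : Finset (Fin q) → ℕ}
    (hb : ∀ T, IsCover T → r ≤ ∑ A ∈ T, b A.1) {A₁ A₂ : EIdx q} (hb₁ : b A₁.1 = 0)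
    (hb₂ : b A₂.1 = 0) {T : Finset (EIdx q)} (hT : IsCover T) :
    r ≤ ∑ A ∈ T, if A.1 = A₁.1 ∪ A₂.1 then b A.1 - 1 else b A.1 := by
  classical
  set A₀ : EIdx q := ⟨A₁.1 ∪ A₂.1, A₁.2.mono Finset.subset_union_left⟩
  calc r ≤ ∑ A ∈ insert A₁ (insert A₂ (T.erase A₀)), b A.1 := hb _ (hT.insert_insert_erase rfl)
    _ = ∑ A ∈ T.erase A₀, b A.1 := by
      rw [Finset.sum_insert_of_eq_zero_if_notMem (f := fun A : EIdx q => b A.1) fun _ => hb₁,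
        Finset.sum_insert_of_eq_zero_if_notMem (f := fun A : EIdx q => b A.1) fun _ => hb₂]
    _ = ∑ A ∈ T.erase A₀, if A.1 = A₁.1 ∪ A₂.1 then b A.1 - 1 else b A.1 :=
      Finset.sum_congr rfl fun A hA =>
        (if_neg fun h => (Finset.ne_of_mem_erase hA) (Subtype.ext h)).symm
    _ ≤ _ := Finset.sum_le_sum_of_subset (Finset.erase_subset _ _)

end ExtremalIdeal

theorem stmt16_general (k : Type*) [Field k] (q : ℕ)
    (b : Finset (Fin q) → ℕ)
    -- `y^b` is a minimal monomial generator of `E_q^{(2)}`: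
    (hmem : ymonF k q b ∈ symbPow (extIdeal k q) 2)
    (hminimal : ∀ A : EIdx q, 0 < b A.1 →
      ymonF k q (fun B => if B = A.1 then b B - 1 else b B) ∉
        symbPow (extIdeal k q) 2) :
    -- `D = {A : A nonempty, b_A = 0}` is closed under unions …
    (∀ A₁ A₂ : Finset (Fin q), A₁.Nonempty → b A₁ = 0 → A₂.Nonempty → b A₂ = 0 →
      b (A₁ ∪ A₂) = 0) ∧
    -- … in particular, if `D` is nonempty it has a maximum element
    ((∃ A : Finset (Fin q), A.Nonempty ∧ b A = 0) →
      ∃ M : Finset (Fin q), (M.Nonempty ∧ b M = 0) ∧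
        ∀ A : Finset (Fin q), A.Nonempty → b A = 0 → A ⊆ M) := by
  have hcovers := (ymonF_mem_symbPow_iff b 2).1 hmem
  have hunion : ∀ A₁ A₂ : Finset (Fin q), A₁.Nonempty → b A₁ = 0 → A₂.Nonempty → b A₂ = 0 →
      b (A₁ ∪ A₂) = 0 := by
    intro A₁ A₂ h₁ hb₁ h₂ hb₂
    by_contra hpos
    refine hminimal ⟨A₁ ∪ A₂, h₁.mono Finset.subset_union_left⟩ (Nat.pos_of_ne_zero hpos)
      ((ymonF_mem_symbPow_iff _ 2).2 fun T hT => ?_)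
    exact le_sum_decrement_union hcovers (A₁ := ⟨A₁, h₁⟩) (A₂ := ⟨A₂, h₂⟩) hb₁ hb₂ hT
  have hD : SupClosed {A : Finset (Fin q) | A.Nonempty ∧ b A = 0} := fun A hA B hB =>
    ⟨hA.1.mono Finset.subset_union_left, hunion A B hA.1 hA.2 hB.1 hB.2⟩
  refine ⟨hunion, fun hne => ?_⟩
  obtain ⟨M, hM, hMmax⟩ := hD.exists_isGreatest (Set.toFinite _) hne
  exact ⟨M, hM, fun A h₁ h₂ => hMmax ⟨h₁, h₂⟩⟩

theorem stmt16 (k : Type*) [Field k] (q : ℕ) (hq : 1 ≤ q)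
    (b : Finset (Fin q) → ℕ)
    -- `y^b` is a minimal monomial generator of `E_q^{(2)}`:
    (hmem : ymonF k q b ∈ symbPow (extIdeal k q) 2)
    (hminimal : ∀ A : EIdx q, 0 < b A.1 →
      ymonF k q (fun B => if B = A.1 then b B - 1 else b B) ∉
        symbPow (extIdeal k q) 2) :
    -- `D = {A : A nonempty, b_A = 0}` is closed under unions …
    (∀ A₁ A₂ : Finset (Fin q), A₁.Nonempty → b A₁ = 0 → A₂.Nonempty → b A₂ = 0 →
      b (A₁ ∪ A₂) = 0) ∧
    -- … in particular, if `D` is nonempty it has a maximum element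
    ((∃ A : Finset (Fin q), A.Nonempty ∧ b A = 0) →
      ∃ M : Finset (Fin q), (M.Nonempty ∧ b M = 0) ∧
        ∀ A : Finset (Fin q), A.Nonempty → b A = 0 → A ⊆ M) :=
  stmt16_general k q b hmem hminimal
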